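/- Let μ > 0, s ∈ ℝ, l(s) = (max{0, 1−s})² be the squared margin loss and U_μ(s) = 1/(1+μ|s|). Define l̃_μ(s) = −(2/μ)(1/μ − 1)·log(1−μs) − (2/μ)s + C for s ≤ 0, l̃_μ(s) = −(2/μ)(1/μ + 1)·log(1+μs) + (2/μ)s + C for 0 < s < 1, and l̃_μ(s) = 0 for s ≥ 1, where C = (2/μ)(1/μ + 1)·log(1+μ) − 2/μ. Then l̃_μ is continuous on ℝ and l̃_μ'(s) = U_μ(s)·l'(s) for all s ∉ {0, 1}. -/

import Mathlib

/-- Equivalent loss of the squared margin loss under the margin-based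
uncertainty `U_μ(s) = 1/(1+μ|s|)`. -/
noncomputable def ltilSqHinge (μ : ℝ) (s : ℝ) : ℝ :=
  if s ≤ 0 then
    -((2/μ) * (1/μ - 1) * Real.log (1 - μ * s)) - (2/μ) * s
      + ((2/μ) * (1/μ + 1) * Real.log (1 + μ) - 2/μ)
  else if s < 1 then
    -((2/μ) * (1/μ + 1) * Real.log (1 + μ * s)) + (2/μ) * s
      + ((2/μ) * (1/μ + 1) * Real.log (1 + μ) - 2/μ)
  else 0

/-!
On `s ≤ 0` and on `0 < s < 1` the loss is given by two logarithmic branches whose derivative is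
`2 (s - 1) / (1 + μ |s|) = U_μ(s) l'(s)`. The constant `C` is chosen so that the second branch
vanishes at `1`, and both branches take the value `C` at `0`, so the pieces glue continuously.
-/

open Real Filter Set Topology

noncomputable def ltilSqHingeNeg (μ s : ℝ) : ℝ :=
  -((2/μ) * (1/μ - 1) * Real.log (1 - μ * s)) - (2/μ) * s
      + ((2/μ) * (1/μ + 1) * Real.log (1 + μ) - 2/μ)

noncomputable def ltilSqHingePos (μ s : ℝ) : ℝ :=
  -((2/μ) * (1/μ + 1) * Real.log (1 + μ * s)) + (2/μ) * s
      + ((2/μ) * (1/μ + 1) * Real.log (1 + μ) - 2/μ)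

theorem ltilSqHingeNeg_zero (μ : ℝ) : ltilSqHingeNeg μ 0 = ltilSqHingePos μ 0 := by
  simp [ltilSqHingeNeg, ltilSqHingePos]

theorem ltilSqHingePos_one (μ : ℝ) : ltilSqHingePos μ 1 = 0 := by
  simp [ltilSqHingePos]

section Branches

variable {μ s : ℝ}

theorem ltilSqHinge_of_nonpos (hs : s ≤ 0) : ltilSqHinge μ s = ltilSqHingeNeg μ s :=
  if_pos hs

theorem ltilSqHinge_of_mem_Ioo (hs : s ∈ Ioo 0 1) : ltilSqHinge μ s = ltilSqHingePos μ s := by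
  rw [ltilSqHinge, if_neg hs.1.not_ge, if_pos hs.2, ltilSqHingePos]

theorem ltilSqHinge_of_one_le (hs : 1 ≤ s) : ltilSqHinge μ s = 0 := by
  rw [ltilSqHinge, if_neg (by linarith), if_neg hs.not_gt]

theorem hasDerivAt_ltilSqHingeNeg (hμ : μ ≠ 0) (hs : 1 - μ * s ≠ 0) :
    HasDerivAt (ltilSqHingeNeg μ) (2 * (s - 1) / (1 - μ * s)) s := by
  have hlog : HasDerivAt (fun t => Real.log (1 - μ * t)) (-μ / (1 - μ * s)) s := by
    simpa using (((hasDerivAt_id s).const_mul μ).const_sub 1).log hs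
  refine (((hlog.const_mul ((2/μ) * (1/μ - 1))).neg.sub
    ((hasDerivAt_id' s).const_mul (2/μ))).add_const
      ((2/μ) * (1/μ + 1) * Real.log (1 + μ) - 2/μ)).congr_deriv ?_
  field_simp
  ring

theorem hasDerivAt_ltilSqHingePos (hμ : μ ≠ 0) (hs : 1 + μ * s ≠ 0) :
    HasDerivAt (ltilSqHingePos μ) (2 * (s - 1) / (1 + μ * s)) s := by
  have hlog : HasDerivAt (fun t => Real.log (1 + μ * t)) (μ / (1 + μ * s)) s := by
    simpa using (((hasDerivAt_id s).const_mul μ).const_add 1).log hs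
  refine (((hlog.const_mul ((2/μ) * (1/μ + 1))).neg.add
    ((hasDerivAt_id' s).const_mul (2/μ))).add_const
      ((2/μ) * (1/μ + 1) * Real.log (1 + μ) - 2/μ)).congr_deriv ?_
  field_simp
  ring

end Branches

theorem continuous_ltilSqHinge {μ : ℝ} (hμ : 0 < μ) : Continuous (ltilSqHinge μ) := by
  have hneg : ContinuousOn (ltilSqHingeNeg μ) {s | s ≤ 0} := fun s (hs : s ≤ 0) =>
    (hasDerivAt_ltilSqHingeNeg hμ.ne' (by nlinarith)).continuousAt.continuousWithinAt
  have hpos : ContinuousOn (fun s => if s < 1 then ltilSqHingePos μ s else 0) {s | 0 ≤ s} := by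
    refine ContinuousOn.if ?_ ?_ continuousOn_const
    · rintro s ⟨-, hs⟩
      rw [show {s : ℝ | s < 1} = Iio 1 from rfl, frontier_Iio, mem_singleton_iff] at hs
      rw [hs, ltilSqHingePos_one]
    · rintro s ⟨hs, -⟩
      exact (hasDerivAt_ltilSqHingePos hμ.ne' (by nlinarith [mem_ofPred.mp hs])).continuousAt
        |>.continuousWithinAt
  refine continuous_if_le continuous_id continuous_const hneg hpos fun s hs => ?_
  subst hs
  rw [if_pos one_pos]
  exact ltilSqHingeNeg_zero μ

theorem hasDerivAt_sqHinge {s : ℝ} (hs : s ≠ 1) :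
    HasDerivAt (fun s : ℝ => (max 0 (1 - s)) ^ 2) (-2 * max 0 (1 - s)) s := by
  rcases hs.lt_or_gt with hs | hs
  · have hquad : HasDerivAt (fun t : ℝ => (1 - t) ^ 2) (-2 * (1 - s)) s := by
      simpa using ((hasDerivAt_id s).const_sub 1).fun_pow 2
    rw [max_eq_right (by linarith)]
    refine hquad.congr_of_eventuallyEq ?_
    filter_upwards [Iio_mem_nhds hs] with t ht
    rw [max_eq_right (by linarith [mem_Iio.mp ht])]
  · rw [max_eq_left (by linarith), mul_zero]
    refine (hasDerivAt_const s (0 : ℝ)).congr_of_eventuallyEq ?_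
    filter_upwards [Ioi_mem_nhds hs] with t ht
    rw [max_eq_left (by linarith [mem_Ioi.mp ht]), zero_pow two_ne_zero]

theorem hasDerivAt_ltilSqHinge {μ s : ℝ} (hμ : 0 < μ) (h0 : s ≠ 0) (h1 : s ≠ 1) :
    HasDerivAt (ltilSqHinge μ) (-2 * max 0 (1 - s) / (1 + μ * |s|)) s := by
  rcases h0.lt_or_gt with hneg | hpos
  · have hden : 1 - μ * s ≠ 0 := by nlinarith
    have hloc : ltilSqHinge μ =ᶠ[𝓝 s] ltilSqHingeNeg μ := by
      filter_upwards [Iio_mem_nhds hneg] with t ht using ltilSqHinge_of_nonpos (le_of_lt ht)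
    refine ((hasDerivAt_ltilSqHingeNeg hμ.ne' hden).congr_of_eventuallyEq hloc).congr_deriv ?_
    rw [max_eq_right (by linarith), abs_of_neg hneg, mul_neg, ← sub_eq_add_neg]
    ring
  rcases h1.lt_or_gt with hlt | hgt
  · have hden : 1 + μ * s ≠ 0 := by nlinarith
    have hloc : ltilSqHinge μ =ᶠ[𝓝 s] ltilSqHingePos μ := by
      filter_upwards [Ioo_mem_nhds hpos hlt] with t ht using ltilSqHinge_of_mem_Ioo ht
    refine ((hasDerivAt_ltilSqHingePos hμ.ne' hden).congr_of_eventuallyEq hloc).congr_deriv ?_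
    rw [max_eq_right (by linarith), abs_of_pos hpos]
    ring
  · have hloc : ltilSqHinge μ =ᶠ[𝓝 s] fun _ => 0 := by
      filter_upwards [Ioi_mem_nhds hgt] with t ht using ltilSqHinge_of_one_le (le_of_lt ht)
    rw [max_eq_left (by linarith), mul_zero, zero_div]
    exact (hasDerivAt_const s 0).congr_of_eventuallyEq hloc

theorem stmt3 (μ : ℝ) (hμ : 0 < μ) :
    Continuous (ltilSqHinge μ) ∧
    ∀ s : ℝ, s ≠ 0 → s ≠ 1 →
      deriv (ltilSqHinge μ) s
        = (1 / (1 + μ * |s|)) * deriv (fun s : ℝ => (max 0 (1 - s))^2) s := by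
  refine ⟨continuous_ltilSqHinge hμ, fun s h0 h1 => ?_⟩
  rw [(hasDerivAt_ltilSqHinge hμ h0 h1).deriv, (hasDerivAt_sqHinge h1).deriv]
  ring
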